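/- arXiv:1901.01389 — 7 statements merged into one kernel-verified Lean document; each statement's English description precedes it below -/
import Mathlib

section
/- Let $S \in \mathbb{R}^{p\times p}$, $\Phi \in \mathbb{R}^{\nu\times\nu}$, $T \in \mathbb{R}^{\nu\times p}$, $\Gamma \in \mathbb{R}^{1\times p}$, $\Lambda \in \mathbb{R}^{1\times \nu}$ satisfy $TS = \Phi T$ and $\Gamma = \Lambda T$. Assume the pair $(\Gamma, S)$ is detectable. If $i\alpha$ (with $\alpha \in \mathbb{R}$) is an eigenvalue of $S$ of algebraic multiplicity $k$, then $i\alpha$ is an eigenvalue of $\Phi$ of algebraic multiplicity at least $k$. Consequently $\nu \ge p$ whenever all eigenvalues of $S$ lie on the imaginary axis. -/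
/-- Hautus-test detectability of a pair `(Γ, S)` of real matrices, considered
over the complexification. -/
def Detectable3 {n : Type*} [Fintype n] [DecidableEq n]
    (Γ : Matrix (Fin 1) n ℝ) (S : Matrix n n ℝ) : Prop :=
  ∀ lam : ℂ, 0 ≤ lam.re → ∀ v : n → ℂ,
    (S.map (Complex.ofReal)).mulVec v = lam • v →
    (Γ.map (Complex.ofReal)).mulVec v = 0 → v = 0

/-!
Since `T S = Φ T`, the map `T` sends each generalized eigenspace of `S` into the generalized
eigenspace of `Φ` for the same eigenvalue, and `ker T` is `S`-invariant. An eigenvector of `S`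
in `ker T` is also killed by `Γ = Λ T`, so by detectability `ker T` contains no eigenvector of
`S` for an eigenvalue `μ` with `Re μ ≥ 0`. An invariant subspace without `μ`-eigenvectors has
no generalized `μ`-eigenvectors either, so `T` embeds the generalized `iα`-eigenspace of `S`
into that of `Φ`; their dimensions are the algebraic multiplicities. If every eigenvalue of `S`
is imaginary, `ker T` is an invariant subspace with no eigenvector at all, hence zero over `ℂ`,
and `T : ℂ^p → ℂ^ν` is injective.
-/

open Complex Module End Matrix

namespace Module.End

section CommRing

variable {R V W : Type*} [CommRing R] [AddCommGroup V] [Module R V] [AddCommGroup W]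
  [Module R W] {f : End R V} {g : End R W} {t : V →ₗ[R] W}

lemma mapsTo_maxGenEigenspace_of_comp_eq (h : t ∘ₗ f = g ∘ₗ t) (μ : R) :
    Set.MapsTo t (f.maxGenEigenspace μ) (g.maxGenEigenspace μ) := by
  have hsub : t ∘ₗ (f - μ • 1) = (g - μ • 1) ∘ₗ t := by
    ext x
    simpa using LinearMap.congr_fun h x
  intro x hx
  obtain ⟨k, hk⟩ := (mem_maxGenEigenspace _ _ _).mp hx
  refine (mem_maxGenEigenspace _ _ _).mpr ⟨k, ?_⟩
  rw [← LinearMap.comp_apply, commute_pow_left_of_commute hsub.symm, LinearMap.comp_apply, hk,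
    map_zero]

lemma apply_mem_ker_of_comp_eq (h : t ∘ₗ f = g ∘ₗ t) :
    ∀ x ∈ LinearMap.ker t, f x ∈ LinearMap.ker t := fun x hx => by
  rw [LinearMap.mem_ker] at hx ⊢
  rw [← LinearMap.comp_apply, h, LinearMap.comp_apply, hx, map_zero]

lemma disjoint_maxGenEigenspace_of_disjoint_eigenspace {p : Submodule R V}
    (hfp : ∀ x ∈ p, f x ∈ p) {μ : R} (hμp : Disjoint (f.eigenspace μ) p) :
    Disjoint (f.maxGenEigenspace μ) p := by
  have hbot : maxGenEigenspace (f.restrict hfp) μ = ⊥ := by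
    by_contra hne
    exact HasUnifEigenvalue.lt zero_lt_one hne (eigenspace_restrict_eq_bot hfp hμp)
  rw [disjoint_comm, disjoint_iff, Submodule.inf_genEigenspace f p hfp]
  exact (congrArg (Submodule.map p.subtype) hbot).trans (Submodule.map_bot _)

end CommRing

section Field

variable {K V W : Type*} [Field K] [AddCommGroup V] [Module K V] [FiniteDimensional K V]
  [AddCommGroup W] [Module K W] {f : End K V} {g : End K W} {t : V →ₗ[K] W}

lemma eq_bot_of_forall_disjoint_eigenspace [IsAlgClosed K] {p : Submodule K V}
    (hfp : ∀ x ∈ p, f x ∈ p) (hp : ∀ μ, Disjoint (f.eigenspace μ) p) : p = ⊥ := by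
  by_contra hne
  have : Nontrivial p := Submodule.nontrivial_iff_ne_bot.mpr hne
  obtain ⟨μ, hμ⟩ := exists_eigenvalue (f.restrict hfp)
  exact hμ (eigenspace_restrict_eq_bot hfp (hp μ))

lemma rootMultiplicity_charpoly_le_of_comp_eq [FiniteDimensional K W] (h : t ∘ₗ f = g ∘ₗ t)
    {μ : K} (hμ : Disjoint (f.eigenspace μ) (LinearMap.ker t)) :
    f.charpoly.rootMultiplicity μ ≤ g.charpoly.rootMultiplicity μ := by
  have hdisj := disjoint_maxGenEigenspace_of_disjoint_eigenspace (apply_mem_ker_of_comp_eq h) hμ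
  rw [← LinearMap.finrank_maxGenEigenspace_eq, ← LinearMap.finrank_maxGenEigenspace_eq]
  exact LinearMap.finrank_le_finrank_of_injective
    (f := t.restrict fun _ hx => mapsTo_maxGenEigenspace_of_comp_eq h μ hx)
    ((LinearMap.injective_restrict_iff _).mpr hdisj)

lemma injective_of_comp_eq [IsAlgClosed K] (h : t ∘ₗ f = g ∘ₗ t)
    (hμ : ∀ μ, f.HasEigenvalue μ → Disjoint (f.eigenspace μ) (LinearMap.ker t)) :
    Function.Injective t := by
  refine LinearMap.ker_eq_bot.mp
    (eq_bot_of_forall_disjoint_eigenspace (apply_mem_ker_of_comp_eq h) fun μ => ?_)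
  by_cases hf : f.HasEigenvalue μ
  · exact hμ μ hf
  · rw [hasEigenvalue_iff, not_not] at hf
    exact hf ▸ disjoint_bot_left

end Field

end Module.End

lemma Matrix.hasEigenvalue_toLin'_iff_mem_spectrum {n K : Type*} [Fintype n] [DecidableEq n]
    [Field K] (M : Matrix n n K) (μ : K) : HasEigenvalue M.toLin' μ ↔ μ ∈ spectrum K M := by
  rw [hasEigenvalue_iff_isRoot_charpoly, Matrix.charpoly_toLin',
    Matrix.mem_spectrum_iff_isRoot_charpoly]

lemma Matrix.map_ofReal_mul {l m n : Type*} [Fintype m] (A : Matrix l m ℝ) (B : Matrix m n ℝ) :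
    (A * B).map ofReal = A.map ofReal * B.map ofReal :=
  Matrix.map_mul (f := ofRealHom)

lemma Matrix.toLin'_map_ofReal_comp_eq {m n : Type*} [Fintype m] [Fintype n] [DecidableEq m]
    [DecidableEq n] {S : Matrix n n ℝ} {Φ : Matrix m m ℝ} {T : Matrix m n ℝ}
    (h : T * S = Φ * T) :
    (T.map ofReal).toLin' ∘ₗ (S.map ofReal).toLin' =
      (Φ.map ofReal).toLin' ∘ₗ (T.map ofReal).toLin' := by
  rw [← Matrix.toLin'_mul, ← Matrix.toLin'_mul, ← map_ofReal_mul, ← map_ofReal_mul, h]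

lemma Detectable3.disjoint_eigenspace_ker {m n : Type*} [Fintype m] [Fintype n] [DecidableEq n]
    {Γ : Matrix (Fin 1) n ℝ} {S : Matrix n n ℝ} {Λ : Matrix (Fin 1) m ℝ} {T : Matrix m n ℝ}
    (hdet : Detectable3 Γ S) (hΓ : Γ = Λ * T) {μ : ℂ} (hμ : 0 ≤ μ.re) :
    Disjoint (eigenspace (S.map ofReal).toLin' μ) (LinearMap.ker (T.map ofReal).toLin') := by
  refine Submodule.disjoint_def.mpr fun v hv hTv => hdet μ hμ v (mem_eigenspace_iff.mp hv) ?_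
  rw [LinearMap.mem_ker, Matrix.toLin'_apply] at hTv
  rw [hΓ, map_ofReal_mul, ← Matrix.mulVec_mulVec, hTv, Matrix.mulVec_zero]

/-- If `TS = ΦT`, `Γ = ΛT` and `(Γ, S)` is detectable, then every
purely imaginary eigenvalue `iα` of `S` of algebraic multiplicity `k` is an
eigenvalue of `Φ` of algebraic multiplicity at least `k`; consequently `ν ≥ p`
whenever all eigenvalues of `S` lie on the imaginary axis. -/
theorem stmt3 (p ν : ℕ)
    (S : Matrix (Fin p) (Fin p) ℝ) (Φ : Matrix (Fin ν) (Fin ν) ℝ)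
    (T : Matrix (Fin ν) (Fin p) ℝ)
    (Γ : Matrix (Fin 1) (Fin p) ℝ) (Λ : Matrix (Fin 1) (Fin ν) ℝ)
    (hTS : T * S = Φ * T) (hΓ : Γ = Λ * T)
    (hdet : Detectable3 Γ S) :
    (∀ α : ℝ,
      Polynomial.rootMultiplicity ((α : ℂ) * Complex.I)
          (Matrix.charpoly (S.map (Complex.ofReal))) ≤
        Polynomial.rootMultiplicity ((α : ℂ) * Complex.I)
          (Matrix.charpoly (Φ.map (Complex.ofReal)))) ∧
    ((∀ μ ∈ spectrum ℂ (S.map (Complex.ofReal)), μ.re = 0) → p ≤ ν) := by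
  have hcomp := toLin'_map_ofReal_comp_eq hTS
  refine ⟨fun α => ?_, fun hspec => ?_⟩
  · rw [← Matrix.charpoly_toLin', ← Matrix.charpoly_toLin']
    exact rootMultiplicity_charpoly_le_of_comp_eq hcomp (hdet.disjoint_eigenspace_ker hΓ (by simp))
  · have hinj := injective_of_comp_eq hcomp fun μ hμ => hdet.disjoint_eigenspace_ker hΓ
      (hspec μ ((hasEigenvalue_toLin'_iff_mem_spectrum _ μ).mp hμ)).ge
    simpa using LinearMap.finrank_le_finrank_of_injective hinj
end

section
/- Let $A \in \mathbb{R}^{n\times n}$, $B \in \mathbb{R}^{n\times 1}$, $P \in \mathbb{R}^{n\times p}$, $S \in \mathbb{R}^{p\times p}$, $C \in \mathbb{R}^{1\times n}$, $D \in \mathbb{R}$, $Q \in \mathbb{R}^{1\times p}$, and suppose there exist $\Pi \in \mathbb{R}^{n\times p}$ and $\Gamma \in \mathbb{R}^{1\times p}$ with $\Pi S = A\Pi + B\Gamma + P$ and $C\Pi + D\Gamma + Q = 0$. If the pair $\left(\begin{bmatrix} C & Q\end{bmatrix}, \begin{bmatrix} A & P \\ 0 & S\end{bmatrix}\right)$ is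 detectable, then the pair $(\Gamma, S)$ is detectable. -/
/-!
If `S v = λ v` and `Γ v = 0`, the regulator equations show that `(Π v, v)` is an eigenvector of
`[[A, P], [0, S]]` for the same eigenvalue `λ`, annihilated by `[C Q]` since
`C Π v + Q v = -D Γ v = 0`. Detectability of the augmented pair forces `(Π v, v) = 0`, so `v = 0`.
-/

/-- Hautus-test detectability of a pair `(M, N)` of real matrices, considered
over the complexification. -/
def Detectable4 {n : Type*} [Fintype n] [DecidableEq n]
    (M : Matrix (Fin 1) n ℝ) (N : Matrix n n ℝ) : Prop :=
  ∀ lam : ℂ, 0 ≤ lam.re → ∀ v : n → ℂ,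
    (N.map (Complex.ofReal)).mulVec v = lam • v →
    (M.map (Complex.ofReal)).mulVec v = 0 → v = 0

open Matrix

section Regulator

variable {R : Type*} [CommRing R] {k m n p : Type*} [Fintype k] [Fintype n] [Fintype p]
  {Pi : Matrix n p R} {Γ : Matrix k p R} {v : p → R}

theorem fromBlocks_mulVec_sumElim_eq_smul_of_regulator {A : Matrix n n R} {B : Matrix n k R}
    {P : Matrix n p R} {S : Matrix p p R} (hreg : Pi * S = A * Pi + B * Γ + P) {μ : R}
    (hv : S *ᵥ v = μ • v) (hΓv : Γ *ᵥ v = 0) :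
    fromBlocks A P 0 S *ᵥ Sum.elim (Pi *ᵥ v) v = μ • Sum.elim (Pi *ᵥ v) v := by
  have hPiv : A *ᵥ (Pi *ᵥ v) + P *ᵥ v = μ • (Pi *ᵥ v) := by
    have := congrArg (· *ᵥ v) hreg
    simp only [add_mulVec, ← mulVec_mulVec, hv, hΓv, mulVec_smul, mulVec_zero, add_zero] at this
    exact this.symm
  rw [fromBlocks_mulVec, Sum.elim_comp_inl, Sum.elim_comp_inr, hPiv, zero_mulVec, zero_add, hv]
  ext (i | i) <;> rfl

theorem fromCols_mulVec_sumElim_eq_zero_of_regulator {C : Matrix m n R} {D : Matrix m k R}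
    {Q : Matrix m p R} (hreg : C * Pi + D * Γ + Q = 0) (hΓv : Γ *ᵥ v = 0) :
    fromCols C Q *ᵥ Sum.elim (Pi *ᵥ v) v = 0 := by
  simpa only [add_mulVec, ← mulVec_mulVec, hΓv, mulVec_zero, add_zero, zero_mulVec,
    fromCols_mulVec_sumElim] using congrArg (· *ᵥ v) hreg

end Regulator

/-- If the linearized regulator equations `ΠS = AΠ + BΓ + P` and
`CΠ + DΓ + Q = 0` hold and the pair `([C Q], [[A,P],[0,S]])` is detectable,
then the pair `(Γ, S)` is detectable. -/
theorem stmt4 (n p : ℕ)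
    (A : Matrix (Fin n) (Fin n) ℝ) (B : Matrix (Fin n) (Fin 1) ℝ)
    (P : Matrix (Fin n) (Fin p) ℝ) (S : Matrix (Fin p) (Fin p) ℝ)
    (C : Matrix (Fin 1) (Fin n) ℝ) (D : ℝ) (Q : Matrix (Fin 1) (Fin p) ℝ)
    (Pi : Matrix (Fin n) (Fin p) ℝ) (Γ : Matrix (Fin 1) (Fin p) ℝ)
    (hreg1 : Pi * S = A * Pi + B * Γ + P)
    (hreg2 : C * Pi + D • Γ + Q = 0)
    (hdet : Detectable4
      (Matrix.of fun i j => Sum.elim (C i) (Q i) j)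
      (Matrix.fromBlocks A P 0 S)) :
    Detectable4 Γ S := by
  intro μ hμ v hv hΓv
  set f := Complex.ofRealHom
  have hreg1ℂ : Pi.map f * S.map f = A.map f * Pi.map f + B.map f * Γ.map f + P.map f := by
    simpa only [Matrix.map_mul, Matrix.map_add _ (map_add f)] using congrArg (·.map f) hreg1
  have hreg2' : C * Pi + (D • 1 : Matrix (Fin 1) (Fin 1) ℝ) * Γ + Q = 0 := by
    rwa [smul_mul, Matrix.one_mul]
  have hreg2ℂ :
      C.map f * Pi.map f + (D • 1 : Matrix (Fin 1) (Fin 1) ℝ).map f * Γ.map f + Q.map f = 0 := by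
    simpa only [Matrix.map_mul, Matrix.map_add _ (map_add f), Matrix.map_zero _ (map_zero f)]
      using congrArg (·.map f) hreg2'
  have hlift := hdet μ hμ (Sum.elim (Pi.map f *ᵥ v) v)
    (by
      rw [fromBlocks_map, Matrix.map_zero _ Complex.ofReal_zero]
      exact fromBlocks_mulVec_sumElim_eq_smul_of_regulator hreg1ℂ hv hΓv)
    (by
      rw [← fromCols, fromCols_map]
      exact fromCols_mulVec_sumElim_eq_zero_of_regulator hreg2ℂ hΓv)
  exact congrArg (· ∘ Sum.inr) hlift
end

section
/- Let $A \in \mathbb{R}^{n\times n}$ be Hurwitz (all eigenvalues have negative real part), and let $B, P, S, C, D, Q, \Pi, \Gamma$ be as follows: $\Pi S = A\Pi + B\Gamma + P$ and $C\Pi + D\Gamma + Q = 0$, where $B \in \mathbb{R}^{n\times 1}$, $C \in \mathbb{R}^{1\times n}$, $D \in \mathbb{R}$. Suppose the pair $\left(\begin{bmatrix} C & Q\end{bmatrix}, \begin{bmatrix} A & P \\ 0 & S\end{bmatrix}\right)$ is detectable and all eigenvalues of $S$ lie on the imaginary axis. Then the transfer function $\mathbf{G}(z) = C(zI-A)^{-1}B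 + D$ satisfies $\mathbf{G}(i\alpha) \ne 0$ for every eigenvalue $i\alpha$ of $S$. -/
/-!
Suppose `G(μ) = 0` at an eigenvalue `μ = iα` of `S`, with eigenvector `w`. Then
`x = (μ - A)⁻¹ P w` completes `w` to an eigenvector `(x, w)` of `[[A, P], [0, S]]`. Applying the
first regulator equation to `w` gives `(μ - A) Π w = B Γ w + P w`, so `x = Π w - (μ - A)⁻¹ B Γ w`,
and the second one turns the output `C x + Q w` into `-G(μ) Γ w = 0`. As `Re μ = 0`, detectability
forces `(x, w) = 0`, contradicting `w ≠ 0`.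
-/

/-- Hautus-test detectability of a pair `(M, N)` of real matrices, considered
over the complexification. -/
def Detectable5 {n : Type*} [Fintype n] [DecidableEq n]
    (M : Matrix (Fin 1) n ℝ) (N : Matrix n n ℝ) : Prop :=
  ∀ lam : ℂ, 0 ≤ lam.re → ∀ v : n → ℂ,
    (N.map (Complex.ofReal)).mulVec v = lam • v →
    (M.map (Complex.ofReal)).mulVec v = 0 → v = 0

namespace Matrix

section Spectrum

variable {K p : Type*} [Fintype p] [DecidableEq p]

theorem isUnit_det_smul_one_sub_iff_notMem_spectrum [CommRing K] {A : Matrix p p K} {μ : K} :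
    IsUnit (μ • 1 - A).det ↔ μ ∉ spectrum K A := by
  rw [spectrum.mem_iff, not_not, Algebra.algebraMap_eq_smul_one, isUnit_iff_isUnit_det]

theorem exists_mulVec_eq_smul_of_mem_spectrum [Field K] {S : Matrix p p K} {μ : K}
    (hμ : μ ∈ spectrum K S) : ∃ w ≠ 0, S *ᵥ w = μ • w := by
  rw [← spectrum_toLin', ← Module.End.hasEigenvalue_iff_mem_spectrum] at hμ
  obtain ⟨w, hw⟩ := hμ.exists_hasEigenvector
  exact ⟨w, hw.2, by simpa using hw.apply_eq_smul⟩

end Spectrum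

section TransferMatrix

variable {K : Type*} [CommRing K] {n p m k : Type*} [Fintype n] [DecidableEq n] [Fintype p]
  [Fintype k] {A : Matrix n n K} {B : Matrix n k K} {P X : Matrix n p K} {S : Matrix p p K}
  {C : Matrix m n K} {D : Matrix m k K} {Q : Matrix m p K} {Γ : Matrix k p K} {μ : K}
  {w : p → K}

noncomputable def transferMatrix (A : Matrix n n K) (B : Matrix n k K) (C : Matrix m n K)
    (D : Matrix m k K) (z : K) : Matrix m k K :=
  C * (z • 1 - A)⁻¹ * B + D

theorem fromBlocks_zero_mulVec_sumElim_eq_smul {x : n → K}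
    (hx : (μ • 1 - A) *ᵥ x = P *ᵥ w) (hw : S *ᵥ w = μ • w) :
    fromBlocks A P 0 S *ᵥ Sum.elim x w = μ • Sum.elim x w := by
  rw [sub_mulVec, smul_mulVec, one_mulVec, sub_eq_iff_eq_add'] at hx
  ext (i | j)
  · simpa [fromBlocks_mulVec] using congrFun hx.symm i
  · simpa [fromBlocks_mulVec] using congrFun hw j

theorem smul_one_sub_mulVec_mulVec_of_mul_eq (hreg : X * S = A * X + B * Γ + P)
    (hw : S *ᵥ w = μ • w) :
    (μ • 1 - A) *ᵥ (X *ᵥ w) = B *ᵥ (Γ *ᵥ w) + P *ᵥ w := by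
  have h := congrArg (· *ᵥ w) hreg
  simp only [← mulVec_mulVec, add_mulVec, hw, mulVec_smul] at h
  rw [sub_mulVec, smul_mulVec, one_mulVec, h]
  abel

theorem fromCols_mulVec_sumElim_eq_neg_transferMatrix_mulVec (hA : IsUnit (μ • 1 - A).det)
    (hreg₁ : X * S = A * X + B * Γ + P) (hreg₂ : C * X + D * Γ + Q = 0)
    (hw : S *ᵥ w = μ • w) :
    fromCols C Q *ᵥ Sum.elim ((μ • 1 - A)⁻¹ *ᵥ (P *ᵥ w)) w
      = -(transferMatrix A B C D μ *ᵥ (Γ *ᵥ w)) := by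
  have hx : (μ • 1 - A)⁻¹ *ᵥ (P *ᵥ w) = X *ᵥ w - (μ • 1 - A)⁻¹ *ᵥ (B *ᵥ (Γ *ᵥ w)) := by
    rw [eq_sub_iff_add_eq, ← mulVec_add, add_comm,
      ← smul_one_sub_mulVec_mulVec_of_mul_eq hreg₁ hw, mulVec_mulVec, nonsing_inv_mul _ hA,
      one_mulVec]
  have hCX : C *ᵥ (X *ᵥ w) + Q *ᵥ w = -(D *ᵥ (Γ *ᵥ w)) := by
    simpa [add_mulVec, mulVec_mulVec, add_right_comm, ← eq_neg_iff_add_eq_zero]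
      using congrArg (· *ᵥ w) hreg₂
  rw [fromCols_mulVec_sumElim, hx, transferMatrix, mulVec_sub, add_mulVec, ← mulVec_mulVec,
    ← mulVec_mulVec, sub_add_eq_add_sub, hCX]
  abel

theorem transferMatrix_mulVec_ne_zero_of_hautus (hA : IsUnit (μ • 1 - A).det)
    (hreg₁ : X * S = A * X + B * Γ + P) (hreg₂ : C * X + D * Γ + Q = 0)
    (hdet : ∀ v, fromBlocks A P 0 S *ᵥ v = μ • v → fromCols C Q *ᵥ v = 0 → v = 0)
    (hw₀ : w ≠ 0) (hw : S *ᵥ w = μ • w) :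
    transferMatrix A B C D μ *ᵥ (Γ *ᵥ w) ≠ 0 := by
  intro hG
  set x := (μ • 1 - A)⁻¹ *ᵥ (P *ᵥ w)
  have hx : (μ • 1 - A) *ᵥ x = P *ᵥ w := by
    rw [mulVec_mulVec, mul_nonsing_inv _ hA, one_mulVec]
  have hv := hdet (Sum.elim x w) (fromBlocks_zero_mulVec_sumElim_eq_smul hx hw)
    (by rw [fromCols_mulVec_sumElim_eq_neg_transferMatrix_mulVec hA hreg₁ hreg₂ hw, hG, neg_zero])
  exact hw₀ (by simpa using congrArg (· ∘ Sum.inr) hv)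

end TransferMatrix

end Matrix

open Matrix in
theorem Detectable5.eq_zero_of_mulVec_eq_smul {n p : Type*} [Fintype n] [DecidableEq n]
    [Fintype p] [DecidableEq p] {A : Matrix n n ℝ} {P : Matrix n p ℝ} {S : Matrix p p ℝ}
    {C : Matrix (Fin 1) n ℝ} {Q : Matrix (Fin 1) p ℝ}
    (h : Detectable5 (fromCols C Q) (fromBlocks A P 0 S)) {μ : ℂ} (hμ : 0 ≤ μ.re)
    (v : n ⊕ p → ℂ)
    (hv : fromBlocks (A.map Complex.ofReal) (P.map Complex.ofReal) 0 (S.map Complex.ofReal) *ᵥ v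
      = μ • v)
    (hout : fromCols (C.map Complex.ofReal) (Q.map Complex.ofReal) *ᵥ v = 0) : v = 0 :=
  h μ hμ v (by rwa [fromBlocks_map, Matrix.map_zero _ Complex.ofReal_zero])
    (by rwa [fromCols_map])

open Matrix in
theorem stmt5_general (n p : ℕ)
    (A : Matrix (Fin n) (Fin n) ℝ) (B : Matrix (Fin n) (Fin 1) ℝ)
    (P : Matrix (Fin n) (Fin p) ℝ) (S : Matrix (Fin p) (Fin p) ℝ)
    (C : Matrix (Fin 1) (Fin n) ℝ) (D : ℝ) (Q : Matrix (Fin 1) (Fin p) ℝ)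
    (Pi : Matrix (Fin n) (Fin p) ℝ) (Γ : Matrix (Fin 1) (Fin p) ℝ)
    (hHurwitz : ∀ μ ∈ spectrum ℂ (A.map (Complex.ofReal)), μ.re < 0)
    (hreg1 : Pi * S = A * Pi + B * Γ + P)
    (hreg2 : C * Pi + D • Γ + Q = 0)
    (hdet : Detectable5
      (Matrix.of fun i j => Sum.elim (C i) (Q i) j)
      (Matrix.fromBlocks A P 0 S)) :
    ∀ α : ℝ, ((α : ℂ) * Complex.I) ∈ spectrum ℂ (S.map (Complex.ofReal)) →
      ((C.map (Complex.ofReal)) *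
          (((α : ℂ) * Complex.I) • (1 : Matrix (Fin n) (Fin n) ℂ)
            - A.map (Complex.ofReal))⁻¹ *
          (B.map (Complex.ofReal))) 0 0 + (D : ℂ) ≠ 0 := by
  intro α hα hG
  set μ : ℂ := (α : ℂ) * Complex.I
  have hμ : μ.re = 0 := by simp [μ]
  obtain ⟨w, hw₀, hw⟩ := exists_mulVec_eq_smul_of_mem_spectrum hα
  have hA : IsUnit (μ • 1 - A.map Complex.ofReal).det :=
    isUnit_det_smul_one_sub_iff_notMem_spectrum.2 fun h => (hHurwitz μ h).ne hμ
  have hreg₁ : Pi.map Complex.ofReal * S.map Complex.ofReal =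
      A.map Complex.ofReal * Pi.map Complex.ofReal + B.map Complex.ofReal * Γ.map Complex.ofReal +
        P.map Complex.ofReal := by
    have h := congrArg (Matrix.map · Complex.ofRealHom) hreg1
    simp only [Matrix.map_mul, Matrix.map_add _ (map_add _)] at h
    exact h
  have hreg₂ : C.map Complex.ofReal * Pi.map Complex.ofReal +
      diagonal (fun _ => (D : ℂ)) * Γ.map Complex.ofReal + Q.map Complex.ofReal = 0 := by
    have h := congrArg (Matrix.map · Complex.ofRealHom) hreg2
    simp only [smul_eq_diagonal_mul, Matrix.map_mul, Matrix.map_add _ (map_add _),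
      diagonal_map (map_zero _), Matrix.map_zero _ (map_zero _)] at h
    exact h
  refine transferMatrix_mulVec_ne_zero_of_hautus hA hreg₁ hreg₂
    (hdet.eq_zero_of_mulVec_eq_smul hμ.ge) hw₀ hw ?_
  convert zero_mulVec (Γ.map Complex.ofReal *ᵥ w)
  ext i j
  simpa [transferMatrix, Subsingleton.elim i 0, Subsingleton.elim j 0] using hG

/-- If `A` is Hurwitz, the linearized regulator equations hold,
the pair `([C Q], [[A,P],[0,S]])` is detectable and all eigenvalues of `S` are
purely imaginary, then the transfer function `G(z) = C (zI - A)⁻¹ B + D`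
satisfies `G(iα) ≠ 0` for every eigenvalue `iα` of `S`. -/
theorem stmt5 (n p : ℕ)
    (A : Matrix (Fin n) (Fin n) ℝ) (B : Matrix (Fin n) (Fin 1) ℝ)
    (P : Matrix (Fin n) (Fin p) ℝ) (S : Matrix (Fin p) (Fin p) ℝ)
    (C : Matrix (Fin 1) (Fin n) ℝ) (D : ℝ) (Q : Matrix (Fin 1) (Fin p) ℝ)
    (Pi : Matrix (Fin n) (Fin p) ℝ) (Γ : Matrix (Fin 1) (Fin p) ℝ)
    (hHurwitz : ∀ μ ∈ spectrum ℂ (A.map (Complex.ofReal)), μ.re < 0)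
    (hreg1 : Pi * S = A * Pi + B * Γ + P)
    (hreg2 : C * Pi + D • Γ + Q = 0)
    (hdet : Detectable5
      (Matrix.of fun i j => Sum.elim (C i) (Q i) j)
      (Matrix.fromBlocks A P 0 S))
    (hSim : ∀ μ ∈ spectrum ℂ (S.map (Complex.ofReal)), μ.re = 0) :
    ∀ α : ℝ, ((α : ℂ) * Complex.I) ∈ spectrum ℂ (S.map (Complex.ofReal)) →
      ((C.map (Complex.ofReal)) *
          (((α : ℂ) * Complex.I) • (1 : Matrix (Fin n) (Fin n) ℂ)
            - A.map (Complex.ofReal))⁻¹ *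
          (B.map (Complex.ofReal))) 0 0 + (D : ℂ) ≠ 0 :=
  stmt5_general n p A B P S C D Q Pi Γ hHurwitz hreg1 hreg2 hdet
end

section
/- Consider the planar system $\dot w_1 = w_2 - w_1^4$, $\dot w_2 = -w_1^3$. The origin $(0,0)$ is a Lyapunov stable equilibrium point: for every $\varepsilon > 0$ there exists $\delta > 0$ such that every solution with initial condition of norm less than $\delta$ exists for all $t \ge 0$ and remains of norm less than $\varepsilon$. -/
/-!
Writing `z = w₂ - w₁⁴`, the system becomes `ẇ₁ = z`, `ż = -w₁³ (1 + 4 z)`, so along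
trajectories `z dz / (1 + 4 z) = -w₁³ dw₁`. Integrating, `V = w₁⁴ / 4 + z / 4 - log (1 + 4 z) / 16`
is a first integral, and it is positive definite near the origin. Lyapunov's argument then
confines every trajectory that starts in a small enough ball to the ball of radius `ε`. This a
priori bound also gives global existence: solve the ODE of a globally Lipschitz, bounded field that
agrees with the given one on the unit ball; the solution never leaves the region where the two
fields agree.
-/

open Set Metric Filter Topology
open scoped NNReal

section GlobalExistence

variable {E : Type*} [NormedAddCommGroup E] [NormedSpace ℝ E] [CompleteSpace E]
  {F : E → E} {K L : ℝ≥0}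

theorem exists_forall_mem_Ioo_hasDerivAt_of_lipschitzWith (hF : LipschitzWith K F)
    (hL : ∀ x, ‖F x‖ ≤ L) (x₀ : E) {a : ℝ} (ha : 0 < a) :
    ∃ γ : ℝ → E, γ 0 = x₀ ∧ ∀ t ∈ Ioo (-a) a, HasDerivAt γ (F (γ t)) t := by
  lift a to ℝ≥0 using ha.le
  have hpl : IsPicardLindelof (fun _ ↦ F) (tmin := -a) (tmax := a)
      ⟨0, by simp⟩ x₀ (L * a) 0 L K :=
    .of_time_independent (fun x _ ↦ hL x) hF.lipschitzOnWith (by simp)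
  obtain ⟨γ, hγ₀, hγ⟩ := hpl.exists_eq_forall_mem_Icc_hasDerivWithinAt₀
  exact ⟨γ, hγ₀, fun t ht ↦
    (hγ t (Ioo_subset_Icc_self ht)).hasDerivAt (Icc_mem_nhds ht.1 ht.2)⟩

theorem exists_forall_hasDerivAt_of_lipschitzWith (hF : LipschitzWith K F)
    (hL : ∀ x, ‖F x‖ ≤ L) (x₀ : E) :
    ∃ γ : ℝ → E, γ 0 = x₀ ∧ ∀ t, HasDerivAt γ (F (γ t)) t := by
  choose! γ hγ₀ hγ using fun a (ha : 0 < a) ↦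
    exists_forall_mem_Ioo_hasDerivAt_of_lipschitzWith hF hL x₀ ha
  have mem_Ioo_abs_add_one (t : ℝ) : t ∈ Ioo (-(|t| + 1)) (|t| + 1) := by
    rw [mem_Ioo, ← abs_lt]
    exact lt_add_one _
  have agree {a b : ℝ} (ha : 0 < a) (hab : a ≤ b) : EqOn (γ a) (γ b) (Ioo (-a) a) :=
    ODE_solution_unique_of_mem_Ioo (v := fun _ ↦ F) (s := fun _ ↦ univ)
      (fun _ _ ↦ hF.lipschitzOnWith) (t₀ := 0) ⟨neg_neg_of_pos ha, ha⟩
      (fun t ht ↦ ⟨hγ a ha t ht, mem_univ _⟩)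
      (fun t ht ↦ ⟨hγ b (ha.trans_le hab) t
        (Ioo_subset_Ioo (neg_le_neg hab) hab ht), mem_univ _⟩)
      (by rw [hγ₀ a ha, hγ₀ b (ha.trans_le hab)])
  refine ⟨fun t ↦ γ (|t| + 1) t, hγ₀ _ (by positivity), fun t ↦ ?_⟩
  have ht := mem_Ioo_abs_add_one t
  refine (hγ _ (by positivity) t ht).congr_of_eventuallyEq ?_
  filter_upwards [Ioo_mem_nhds ht.1 ht.2] with s hs
  rcases le_total (|s| + 1) (|t| + 1) with h | h
  · exact agree (by positivity) h (mem_Ioo_abs_add_one s)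
  · exact (agree (by positivity) h hs).symm

end GlobalExistence

section Lyapunov

variable {E : Type*} [NormedAddCommGroup E] [NormedSpace ℝ E]
  {f : E → E} {V : E → ℝ} {V' : E → E →L[ℝ] ℝ} {r : ℝ}

theorem norm_lt_of_lyapunov {m : ℝ} {γ : ℝ → E}
    (hV : ∀ p ∈ closedBall (0 : E) r, HasFDerivAt V (V' p) p)
    (hVf : ∀ p ∈ closedBall (0 : E) r, V' p (f p) ≤ 0)
    (hm : ∀ p ∈ sphere (0 : E) r, m ≤ V p)
    (hγc : ∀ t, 0 ≤ t → ContinuousAt γ t)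
    (hγ : ∀ t, 0 ≤ t → ‖γ t‖ ≤ r → HasDerivAt γ (f (γ t)) t)
    (h₀ : ‖γ 0‖ < r) (hV₀ : V (γ 0) < m) :
    ∀ t, 0 ≤ t → ‖γ t‖ < r := by
  by_contra! ⟨t₁, ht₁, hrt₁⟩
  -- `T` is the first time at which `γ` reaches the sphere of radius `r`.
  set A := {t | 0 ≤ t ∧ r ≤ ‖γ t‖}
  have hA : IsClosed A :=
    ContinuousOn.preimage_isClosed_of_isClosed
      (fun t ht ↦ (hγc t ht).norm.continuousWithinAt) isClosed_Ici isClosed_Ici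
  have hAbdd : BddBelow A := ⟨0, fun _ h ↦ h.1⟩
  set T := sInf A
  have hTA : T ∈ A := hA.csInf_mem ⟨t₁, ht₁, hrt₁⟩ hAbdd
  have hT₀ : 0 < T := hTA.1.lt_of_ne fun h ↦ (hTA.2.trans_lt (h ▸ h₀)).false
  have before : ∀ s ∈ Ico 0 T, ‖γ s‖ < r := fun s hs ↦
    not_le.1 fun h ↦ (csInf_le hAbdd ⟨hs.1, h⟩).not_gt hs.2
  have hT : ‖γ T‖ = r := by
    refine le_antisymm ?_ hTA.2
    refine ContinuousWithinAt.closure_le (s := Ico 0 T)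
      (by rw [closure_Ico hT₀.ne]; exact ⟨hTA.1, le_rfl⟩)
      (hγc T hTA.1).norm.continuousWithinAt continuousWithinAt_const fun s hs ↦ (before s hs).le
  have inBall : ∀ s ∈ Icc 0 T, γ s ∈ closedBall 0 r := by
    rintro s ⟨hs₀, hsT⟩
    rw [mem_closedBall_zero_iff]
    rcases hsT.lt_or_eq with hsT | rfl
    exacts [(before s ⟨hs₀, hsT⟩).le, hT.le]
  have anti : AntitoneOn (V ∘ γ) (Icc 0 T) := by
    refine antitoneOn_of_hasDerivWithinAt_nonpos (convex_Icc 0 T)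
      (fun s hs ↦ ((hV _ (inBall s hs)).continuousAt.comp (hγc s hs.1)).continuousWithinAt)
      (f' := fun s ↦ V' (γ s) (f (γ s))) (fun s hs ↦ ?_) fun s hs ↦ ?_
    all_goals
      rw [interior_Icc] at hs
      have hs' := inBall s (Ioo_subset_Icc_self hs)
    · exact ((hV _ hs').comp_hasDerivAt s
        (hγ s hs.1.le (mem_closedBall_zero_iff.1 hs'))).hasDerivWithinAt
    · exact hVf _ hs'
  have hVT : V (γ T) ≤ V (γ 0) := anti ⟨le_rfl, hTA.1⟩ ⟨hTA.1, le_rfl⟩ hTA.1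
  have hmT := hm (γ T) (mem_sphere_zero_iff_norm.2 hT)
  linarith

theorem exists_pos_forall_norm_lt_of_lyapunov [ProperSpace E] (hr : 0 < r)
    (hV : ∀ p ∈ closedBall (0 : E) r, HasFDerivAt V (V' p) p) (hV₀ : V 0 = 0)
    (hVpos : ∀ p ∈ sphere (0 : E) r, 0 < V p)
    (hVf : ∀ p ∈ closedBall (0 : E) r, V' p (f p) ≤ 0) :
    ∃ δ > 0, ∀ γ : ℝ → E, (∀ t, 0 ≤ t → ContinuousAt γ t) →
      (∀ t, 0 ≤ t → ‖γ t‖ ≤ r → HasDerivAt γ (f (γ t)) t) →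
      ‖γ 0‖ < δ → ∀ t, 0 ≤ t → ‖γ t‖ < r := by
  obtain ⟨m, hm₀, hm⟩ := (isCompact_sphere (0 : E) r).exists_forall_le'
    (fun p hp ↦ (hV p (sphere_subset_closedBall hp)).continuousAt.continuousWithinAt) hVpos
  have hVm : ∀ᶠ p in 𝓝 (0 : E), V p < m ∧ p ∈ ball 0 r :=
    ((hV 0 (mem_closedBall_self hr.le)).continuousAt.eventually_lt continuousAt_const
      (hV₀ ▸ hm₀)).and (ball_mem_nhds 0 hr)
  obtain ⟨δ, hδ, hδm⟩ := Metric.eventually_nhds_iff.1 hVm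
  refine ⟨δ, hδ, fun γ hγc hγ h₀ ↦ ?_⟩
  obtain ⟨hVγ, hγr⟩ := hδm (show dist (γ 0) 0 < δ by simpa using h₀)
  exact norm_lt_of_lyapunov hV hVf hm hγc hγ (mem_ball_zero_iff.1 hγr) hVγ

end Lyapunov

section UnitBoxCutoff

def clampUnit (s : ℝ) : ℝ := max (-1) (min 1 s)

def clampBox (p : ℝ × ℝ) : ℝ × ℝ := (clampUnit p.1, clampUnit p.2)

theorem lipschitzWith_clampUnit : LipschitzWith 1 clampUnit :=
  (LipschitzWith.id.const_min 1).const_max (-1)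

theorem lipschitzWith_clampBox : LipschitzWith 1 clampBox := by
  have h := (lipschitzWith_clampUnit.comp LipschitzWith.prod_fst).prodMk
    (lipschitzWith_clampUnit.comp LipschitzWith.prod_snd)
  rw [one_mul, max_self] at h
  exact h

theorem clampBox_mem_closedBall (p : ℝ × ℝ) : clampBox p ∈ closedBall 0 1 := by
  simp [clampBox, clampUnit, Prod.norm_def, abs_le]

theorem clampBox_of_mem_closedBall {p : ℝ × ℝ} (hp : p ∈ closedBall 0 1) : clampBox p = p := by
  simp_all [clampBox, clampUnit, Prod.norm_def, abs_le]

theorem exists_eqOn_closedBall_forall_hasDerivAt {f : ℝ × ℝ → ℝ × ℝ} (hf : ContDiff ℝ 1 f) :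
    ∃ G : ℝ × ℝ → ℝ × ℝ, EqOn G f (closedBall 0 1) ∧
      ∀ x₀, ∃ γ : ℝ → ℝ × ℝ, γ 0 = x₀ ∧ ∀ t, HasDerivAt γ (G (γ t)) t := by
  obtain ⟨K, hK⟩ := hf.contDiffOn.exists_lipschitzOnWith one_ne_zero
    (convex_closedBall 0 1) (isCompact_closedBall 0 1)
  obtain ⟨C, hC⟩ := (isCompact_closedBall (0 : ℝ × ℝ) 1).exists_bound_of_continuousOn
    hf.continuous.continuousOn
  refine ⟨f ∘ clampBox, fun p hp ↦ congrArg f (clampBox_of_mem_closedBall hp),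
    exists_forall_hasDerivAt_of_lipschitzWith (K := K * 1) (L := C.toNNReal) ?_ fun p ↦ ?_⟩
  · exact lipschitzOnWith_univ.1 (hK.comp lipschitzWith_clampBox.lipschitzOnWith
      fun p _ ↦ clampBox_mem_closedBall p)
  · exact (hC _ (clampBox_mem_closedBall p)).trans (Real.le_coe_toNNReal C)

end UnitBoxCutoff

def planarField (p : ℝ × ℝ) : ℝ × ℝ := (p.2 - p.1 ^ 4, -p.1 ^ 3)

theorem contDiff_planarField : ContDiff ℝ 1 planarField := by
  unfold planarField
  fun_prop

noncomputable def firstIntegral (p : ℝ × ℝ) : ℝ :=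
  p.1 ^ 4 / 4 + (4 * (p.2 - p.1 ^ 4) - Real.log (1 + 4 * (p.2 - p.1 ^ 4))) / 16

noncomputable def firstIntegralDeriv (p : ℝ × ℝ) : ℝ × ℝ →L[ℝ] ℝ :=
  (1 + 4 * (p.2 - p.1 ^ 4))⁻¹ •
    (p.1 ^ 3 • ContinuousLinearMap.fst ℝ ℝ ℝ + (p.2 - p.1 ^ 4) • ContinuousLinearMap.snd ℝ ℝ ℝ)

theorem hasFDerivAt_firstIntegral {p : ℝ × ℝ} (hp : 0 < 1 + 4 * (p.2 - p.1 ^ 4)) :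
    HasFDerivAt firstIntegral (firstIntegralDeriv p) p := by
  have hx4 := (hasFDerivAt_fst (𝕜 := ℝ) (p := p)).pow 4
  have hz := (hasFDerivAt_snd (𝕜 := ℝ) (p := p)).sub hx4
  have hlog := ((hz.const_mul 4).const_add 1).log hp.ne'
  refine (((hx4.const_mul (1 / 4)).add (((hz.const_mul 4).sub hlog).const_mul (1 / 16)))
    |>.congr_of_eventuallyEq (.of_forall fun q ↦ ?_)).congr_fderiv ?_
  · simp only [firstIntegral, Pi.add_apply, Pi.sub_apply]
    ring
  · refine ContinuousLinearMap.ext fun q ↦ ?_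
    simp only [firstIntegralDeriv, add_apply, sub_apply, smul_apply, smul_eq_mul, nsmul_eq_mul,
      ContinuousLinearMap.coe_fst', ContinuousLinearMap.coe_snd', Pi.sub_apply]
    field_simp
    ring

theorem firstIntegralDeriv_planarField (p : ℝ × ℝ) :
    firstIntegralDeriv p (planarField p) = 0 := by
  simp only [firstIntegralDeriv, planarField, smul_add, add_apply, smul_apply, smul_eq_mul,
    ContinuousLinearMap.coe_fst', ContinuousLinearMap.coe_snd']
  ring

theorem firstIntegral_zero : firstIntegral 0 = 0 := by
  simp [firstIntegral]

theorem one_add_four_mul_pos_of_norm_le {p : ℝ × ℝ} (hp : ‖p‖ ≤ 1 / 8) :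
    0 < 1 + 4 * (p.2 - p.1 ^ 4) := by
  rw [Prod.norm_def, max_le_iff, Real.norm_eq_abs, Real.norm_eq_abs, abs_le, abs_le] at hp
  have hx2 : p.1 ^ 2 ≤ 1 / 64 := by nlinarith
  nlinarith

theorem sub_log_one_add_pos {u : ℝ} (hu : -1 < u) (h0 : u ≠ 0) :
    0 < u - Real.log (1 + u) := by
  have := Real.log_lt_sub_one_of_pos (x := 1 + u) (by linarith) (by simpa using h0)
  linarith

theorem firstIntegral_pos {p : ℝ × ℝ} (hp : ‖p‖ ≤ 1 / 8) (hp0 : p ≠ 0) :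
    0 < firstIntegral p := by
  have hz := one_add_four_mul_pos_of_norm_le hp
  unfold firstIntegral
  rcases eq_or_ne (p.2 - p.1 ^ 4) 0 with h | h
  · have hx : p.1 ≠ 0 := fun hx ↦ hp0 (Prod.ext hx (by simpa [hx] using h))
    simp only [h, mul_zero, add_zero, Real.log_one, sub_zero, zero_div]
    positivity
  · have := sub_log_one_add_pos (u := 4 * (p.2 - p.1 ^ 4)) (by linarith) (by simpa using h)
    positivity

/-- The origin is a Lyapunov stable equilibrium of the planar
system `ẇ₁ = w₂ - w₁⁴`, `ẇ₂ = -w₁³`: for every `ε > 0` there is `δ > 0` such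
that every solution starting with norm `< δ` exists for all `t ≥ 0` and
remains of norm `< ε`. -/
theorem stmt8 :
    ∀ ε > (0:ℝ), ∃ δ > (0:ℝ),
      (∀ w0 : ℝ × ℝ, ‖w0‖ < δ → ∃ w : ℝ → ℝ × ℝ, w 0 = w0 ∧
        (∀ t : ℝ, 0 ≤ t →
          HasDerivAt w ((w t).2 - (w t).1 ^ 4, -(w t).1 ^ 3) t) ∧
        (∀ t : ℝ, 0 ≤ t → ‖w t‖ < ε)) ∧
      (∀ w : ℝ → ℝ × ℝ,
        (∀ t : ℝ, 0 ≤ t →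
          HasDerivAt w ((w t).2 - (w t).1 ^ 4, -(w t).1 ^ 3) t) →
        ‖w 0‖ < δ → ∀ t : ℝ, 0 ≤ t → ‖w t‖ < ε) := by
  intro ε hε
  set r := min ε (1 / 8)
  have hr : 0 < r := lt_min hε (by norm_num)
  have hr8 {p : ℝ × ℝ} (hp : p ∈ closedBall 0 r) : ‖p‖ ≤ 1 / 8 :=
    (mem_closedBall_zero_iff.1 hp).trans (min_le_right _ _)
  obtain ⟨δ, hδ, htrap⟩ := exists_pos_forall_norm_lt_of_lyapunov (f := planarField) hr
    (fun p hp ↦ hasFDerivAt_firstIntegral (one_add_four_mul_pos_of_norm_le (hr8 hp)))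
    firstIntegral_zero
    (fun p hp ↦ firstIntegral_pos (hr8 (sphere_subset_closedBall hp))
      (ne_of_mem_sphere hp hr.ne'))
    (fun p _ ↦ (firstIntegralDeriv_planarField p).le)
  obtain ⟨G, hGf, hG⟩ := exists_eqOn_closedBall_forall_hasDerivAt contDiff_planarField
  have hGr {p : ℝ × ℝ} (hp : ‖p‖ ≤ r) : G p = planarField p :=
    hGf (mem_closedBall_zero_iff.2 (hp.trans ((min_le_right _ _).trans (by norm_num))))
  refine ⟨δ, hδ, fun w₀ hw₀ ↦ ?_, fun w hw hw₀ t ht ↦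
    (htrap w (fun t ht ↦ (hw t ht).continuousAt) (fun t ht _ ↦ hw t ht) hw₀ t ht).trans_le
      (min_le_left _ _)⟩
  obtain ⟨w, rfl, hw⟩ := hG w₀
  have hwr := htrap w (fun t _ ↦ (hw t).continuousAt) (fun t _ hwt ↦ hGr hwt ▸ hw t) hw₀
  exact ⟨w, rfl,
    fun t ht ↦ show HasDerivAt w (planarField (w t)) t from hGr (hwr t ht).le ▸ hw t,
    fun t ht ↦ (hwr t ht).trans_le (min_le_left _ _)⟩
end

section
/- Let $S = \begin{bmatrix}0&1\\-1&0\end{bmatrix}$, $\Phi = \begin{bmatrix}0&0&0\\0&0&-2\\0&2&0\end{bmatrix}$, $\Lambda = \begin{bmatrix}1/2 & 1 & 1/2\end{bmatrix}$, and define $\tau : \mathbb{R}^2 \to \mathbb{R}^3$ by $\tau(w_1,w_2) = (w_1^2 + w_2^2,\; 2 w_1 w_2,\; w_1^2 - w_2^2)$ and $\gamma(w_1,w_2) = w_1^2 + 2 w_1 w_2$. Then for all $w \in \mathbb{R}^2$: $D\tau(w)\,(S w) = \Phi\, \tau(w)$ and $\gamma(w) = \Lambda\, \tau(w)$. Moreover,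 the pair $(\Lambda, \Phi)$ is detectable. -/
/-!
Identify `w` with `z = w₀ + i w₁`. Then `τ w = (|z|², Im z², Re z²)`, and the flow of `S` rotates
`z`, so it fixes `|z|²` and rotates `z²` at twice the speed: this is the generator `Φ`, and the
first identity is the chain rule. Detectability holds because the pair is even observable: an
eigenvector of `Φ` killed by `Λ` vanishes, whatever its eigenvalue.
-/

open ContinuousLinearMap Matrix

theorem fderiv_apply_apply {𝕜 ι E F : Type*} [NontriviallyNormedField 𝕜] [Fintype ι]
    [NormedAddCommGroup E] [NormedSpace 𝕜 E] [NormedAddCommGroup F] [NormedSpace 𝕜 F]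
    {Φ : E → ι → F} {x : E} (hΦ : DifferentiableAt 𝕜 Φ x) (u : E) (i : ι) :
    fderiv 𝕜 Φ x u i = fderiv 𝕜 (fun x => Φ x i) x u := by
  rw [fderiv_apply hΦ i]
  rfl

section Immersion

def squareMap (w : Fin 2 → ℝ) : Fin 3 → ℝ :=
  ![w 0 ^ 2 + w 1 ^ 2, 2 * w 0 * w 1, w 0 ^ 2 - w 1 ^ 2]

theorem differentiable_squareMap : Differentiable ℝ squareMap := fun _ =>
  differentiableAt_pi.2 fun i => by fin_cases i <;> simp [squareMap] <;> fun_prop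

theorem fderiv_squareMap_apply (w u : Fin 2 → ℝ) :
    fderiv ℝ squareMap w u =
      ![2 * (w 0 * u 0 + w 1 * u 1), 2 * (w 1 * u 0 + w 0 * u 1), 2 * (w 0 * u 0 - w 1 * u 1)] := by
  have fderiv_eval (i : Fin 2) : fderiv ℝ (fun x : Fin 2 → ℝ => x i) w = proj i :=
    (hasFDerivAt_apply i w).fderiv
  funext i
  rw [fderiv_apply_apply (differentiable_squareMap w)]
  fin_cases i <;>
    simp (disch := fun_prop) [squareMap, fderiv_fun_add, fderiv_fun_sub, fderiv_fun_mul,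
      fderiv_fun_pow, fderiv_eval] <;> ring

theorem fderiv_squareMap_rotation (w : Fin 2 → ℝ) :
    fderiv ℝ squareMap w (!![0, 1; -1, 0] *ᵥ w) =
      !![0, 0, 0; 0, 0, -2; 0, 2, 0] *ᵥ squareMap w := by
  rw [fderiv_squareMap_apply]
  funext i
  fin_cases i <;> simp [squareMap, mulVec, dotProduct, Fin.sum_univ_three] <;> ring

end Immersion

section Detectability

variable {m n : Type*} [Fintype n]

def IsDetectable (C : Matrix m n ℂ) (A : Matrix n n ℂ) : Prop :=
  ∀ lam : ℂ, 0 ≤ lam.re → ∀ v : n → ℂ, A *ᵥ v = lam • v → C *ᵥ v = 0 → v = 0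

/-- Observability in its Popov–Belevitch–Hautus form. -/
def IsObservable (C : Matrix m n ℂ) (A : Matrix n n ℂ) : Prop :=
  ∀ (lam : ℂ) (v : n → ℂ), A *ᵥ v = lam • v → C *ᵥ v = 0 → v = 0

theorem IsObservable.isDetectable {C : Matrix m n ℂ} {A : Matrix n n ℂ}
    (h : IsObservable C A) : IsDetectable C A :=
  fun lam _ => h lam

end Detectability

theorem isObservable_Λ_Φ :
    IsObservable ((!![1/2, 1, 1/2] : Matrix (Fin 1) (Fin 3) ℝ).map Complex.ofReal)
      ((!![0, 0, 0; 0, 0, -2; 0, 2, 0] : Matrix (Fin 3) (Fin 3) ℝ).map Complex.ofReal) := by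
  intro lam v hΦ hΛ
  have e0 := congrFun hΦ 0
  have e1 := congrFun hΦ 1
  have e2 := congrFun hΦ 2
  have eΛ := congrFun hΛ 0
  simp [mulVec, dotProduct, Fin.sum_univ_three, -mul_eq_zero, -zero_eq_mul] at e0 e1 e2 eΛ
  have hv12 : v 1 = 2 * v 2 := by linear_combination (1/2) * e0 + lam * eΛ + e1 + (1/2) * e2
  have hv2 : v 2 = 0 := by linear_combination (-1/10) * e1 + (1/5) * e2 - (lam + 4) / 10 * hv12
  have hv0 : v 0 = 0 := by linear_combination 2 * eΛ - 2 * hv12 - 5 * hv2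
  ext i
  fin_cases i <;> simp [hv0, hv12, hv2]

/-- The autonomous system `(ℝ², w ↦ Sw, γ)` is immersed into
`(ℝ³, ξ ↦ Φξ, ξ ↦ Λξ)` via `τ(w) = (w₁²+w₂², 2w₁w₂, w₁²-w₂²)`, and the pair
`(Λ, Φ)` is detectable. -/
theorem stmt11
    (S : Matrix (Fin 2) (Fin 2) ℝ) (hS : S = !![0, 1; -1, 0])
    (Φ : Matrix (Fin 3) (Fin 3) ℝ) (hΦ : Φ = !![0, 0, 0; 0, 0, -2; 0, 2, 0])
    (Λ : Matrix (Fin 1) (Fin 3) ℝ) (hΛ : Λ = !![1/2, 1, 1/2])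
    (τ : (Fin 2 → ℝ) → (Fin 3 → ℝ))
    (hτ : τ = fun w => ![(w 0) ^ 2 + (w 1) ^ 2, 2 * w 0 * w 1,
      (w 0) ^ 2 - (w 1) ^ 2])
    (γ : (Fin 2 → ℝ) → ℝ)
    (hγ : γ = fun w => (w 0) ^ 2 + 2 * (w 0) * (w 1)) :
    (∀ w : Fin 2 → ℝ, fderiv ℝ τ w (S.mulVec w) = Φ.mulVec (τ w)) ∧
    (∀ w : Fin 2 → ℝ, γ w = (Λ.mulVec (τ w)) 0) ∧
    (∀ lam : ℂ, 0 ≤ lam.re → ∀ v : Fin 3 → ℂ,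
      (Φ.map (Complex.ofReal)).mulVec v = lam • v →
      (Λ.map (Complex.ofReal)).mulVec v = 0 → v = 0) := by
  subst hS hΦ hΛ hτ hγ
  refine ⟨fderiv_squareMap_rotation, fun w => ?_, isObservable_Λ_Φ.isDetectable⟩
  simp [mulVec, dotProduct, Fin.sum_univ_three]
  ring
end

section
/- Let $F \in \mathbb{R}^{2\times 2}$, $S = \begin{bmatrix}0&1\\-1&0\end{bmatrix}$, and $a_1,a_2,b_1,b_2,c_1,c_2 \in \mathbb{R}$ be such that for all $(w_1,w_2) \in \mathbb{R}^2$, $\begin{bmatrix} a_1 w_1 + c_1 w_2 & b_1 w_2 + c_1 w_1 \\ a_2 w_1 + c_2 w_2 & b_2 w_2 + c_2 w_1\end{bmatrix} S \begin{bmatrix} w_1 \\ w_2\end{bmatrix} = \frac{1}{2} F \begin{bmatrix} a_1 & b_1 & 2c_1 \\ a_2 & b_2 & 2c_2 \end{bmatrix}\begin{bmatrix} w_1^2 \\ w_2^2 \\ w_1 w_2\end{bmatrix}$. Then $F\begin{bmatrix} c_1 \\ c_2\end{bmatrix} = \begin{bmatrix} a_1 - b_1 \\ a_2 - b_2\end{bmatrix}$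 and $F^2 \begin{bmatrix} c_1 \\ c_2\end{bmatrix} = -4 \begin{bmatrix} c_1 \\ c_2\end{bmatrix}$. -/
/-! Writing `S w = (w₂, -w₁)`, both sides of the hypothesis are quadratic forms in `w` with
vector coefficients: the left side is `-w₁² c + w₂² c + w₁w₂ (a - b)` and the right side is
`½ w₁² F a + ½ w₂² F b + w₁w₂ F c`. Matching coefficients gives `F a = -2c`, `F b = 2c` and
`F c = a - b`, hence `F² c = F a - F b = -4c`. -/

open Matrix

theorem eq_of_forall_quadratic_combination_eq {R M : Type*} [CommRing R] [AddCommGroup M]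
    [Module R M] {u v t u' v' t' : M}
    (h : ∀ x y : R, x ^ 2 • u + y ^ 2 • v + (x * y) • t = x ^ 2 • u' + y ^ 2 • v' + (x * y) • t') :
    u = u' ∧ v = v' ∧ t = t' := by
  have hu : u = u' := by simpa using h 1 0
  have hv : v = v' := by simpa using h 0 1
  have ht : u + v + t = u' + v' + t' := by simpa using h 1 1
  exact ⟨hu, hv, by rwa [hu, hv, add_right_inj] at ht⟩

theorem mul_rotation_mulVec_eq {R : Type*} [CommRing R] (a1 a2 b1 b2 c1 c2 w1 w2 : R) :
    (!![a1 * w1 + c1 * w2, b1 * w2 + c1 * w1;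
        a2 * w1 + c2 * w2, b2 * w2 + c2 * w1] * !![0, 1; -1, 0]) *ᵥ ![w1, w2] =
      w1 ^ 2 • -![c1, c2] + w2 ^ 2 • ![c1, c2] + (w1 * w2) • (![a1, a2] - ![b1, b2]) := by
  ext i
  fin_cases i <;> simp [mulVec, dotProduct, Fin.sum_univ_succ] <;> ring

theorem half_smul_mul_mulVec_eq {K : Type*} [Field K] [CharZero K]
    (F : Matrix (Fin 2) (Fin 2) K) (a1 a2 b1 b2 c1 c2 w1 w2 : K) :
    ((1 / 2 : K) • (F * !![a1, b1, 2 * c1; a2, b2, 2 * c2])) *ᵥ ![w1 ^ 2, w2 ^ 2, w1 * w2] =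
      w1 ^ 2 • ((1 / 2 : K) • F *ᵥ ![a1, a2]) + w2 ^ 2 • ((1 / 2 : K) • F *ᵥ ![b1, b2]) +
        (w1 * w2) • F *ᵥ ![c1, c2] := by
  ext i
  fin_cases i <;> simp [mulVec, dotProduct, mul_apply, Fin.sum_univ_succ] <;> ring

theorem mul_self_mulVec_eq_neg_four_smul {n K : Type*} [Fintype n] [Field K] [CharZero K]
    {F : Matrix n n K} {a b c : n → K} (ha : -c = (1 / 2 : K) • F *ᵥ a)
    (hb : c = (1 / 2 : K) • F *ᵥ b) (hc : a - b = F *ᵥ c) :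
    (F * F) *ᵥ c = (-4 : K) • c := by
  rw [← mulVec_mulVec, ← hc, mulVec_sub]
  linear_combination (norm := module) -(2 : K) • ha + (2 : K) • hb

/-- Matching quadratic coefficients in the identity
`M(w) S (w₁, w₂)ᵀ = ½ F [[a₁,b₁,2c₁],[a₂,b₂,2c₂]] (w₁², w₂², w₁w₂)ᵀ`
yields `F (c₁,c₂)ᵀ = (a₁-b₁, a₂-b₂)ᵀ` and `F² (c₁,c₂)ᵀ = -4 (c₁,c₂)ᵀ`. -/
theorem stmt12 (F : Matrix (Fin 2) (Fin 2) ℝ)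
    (S : Matrix (Fin 2) (Fin 2) ℝ) (hS : S = !![0, 1; -1, 0])
    (a1 a2 b1 b2 c1 c2 : ℝ)
    (h : ∀ w1 w2 : ℝ,
      (!![a1 * w1 + c1 * w2, b1 * w2 + c1 * w1;
          a2 * w1 + c2 * w2, b2 * w2 + c2 * w1] * S).mulVec ![w1, w2] =
      ((1/2 : ℝ) • (F * !![a1, b1, 2 * c1; a2, b2, 2 * c2])).mulVec
        ![w1 ^ 2, w2 ^ 2, w1 * w2]) :
    F.mulVec ![c1, c2] = ![a1 - b1, a2 - b2] ∧
    (F * F).mulVec ![c1, c2] = (-4 : ℝ) • ![c1, c2] := by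
  subst hS
  obtain ⟨ha, hb, hc⟩ := eq_of_forall_quadratic_combination_eq fun w1 w2 =>
    (mul_rotation_mulVec_eq a1 a2 b1 b2 c1 c2 w1 w2).symm.trans
      ((h w1 w2).trans (half_smul_mul_mulVec_eq F a1 a2 b1 b2 c1 c2 w1 w2))
  exact ⟨by simpa using hc.symm, mul_self_mulVec_eq_neg_four_smul ha hb hc⟩
end

section
/- Let $\alpha, L, r, z_{10}, z_{20}, \mathcal{D}_0 > 0$, let $w_1 \in \mathbb{R}$, $\rho \ge 0$, and let $\beta \in (0,1)$ with $\rho < \beta \mathcal{D}_0 z_{20}$. Consider the scalar ODE $\frac{d\psi}{d\tau} = \frac{r\psi^2 + (r z_{20} - w_1 - \mathcal{D}_0 z_{10})\psi - z_{20} w_1 + z_{10}\rho\cos\tau}{\alpha L (\psi + z_{20})}$. If $\psi(0) > -z_{20}$, then the maximal solution exists for all $\tau \ge 0$ and satisfies $\psi(\tau) > -z_{20}$ for all $\tau \ge 0$. -/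
/-!
Write `ψ + z₂₀ = e^w`. Then `w' = (r - c e^{-w} + g(τ) e^{-2w}) / (αL)` with
`c = r z₂₀ + w₁ + 𝒟₀ z₁₀` and `g(τ) = z₁₀ (𝒟₀ z₂₀ + ρ cos τ) ≥ z₁₀ (𝒟₀ z₂₀ - ρ) > 0`.
Once `w` is clamped below at a level `m`, this field is bounded and globally Lipschitz, so
Picard–Lindelöf on every `[-T, T]`, glued by uniqueness, gives a global solution. For `m` very
negative the field is positive at `w = m`, so the solution never goes below `m`: the clamp is
never active, and `e^w - z₂₀` solves the original equation and stays above `-z₂₀`.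
-/

open Set Filter Real
open scoped NNReal Topology

section GlobalExistence

variable {E : Type*} [NormedAddCommGroup E] [NormedSpace ℝ E] [CompleteSpace E]
  {F : ℝ → E → E} {K : ℝ≥0} {M : ℝ}

theorem exists_forall_mem_Ioo_hasDerivAt_of_norm_le (hlip : ∀ t, LipschitzWith K (F t))
    (hcont : ∀ x, Continuous (F · x)) (hbdd : ∀ t x, ‖F t x‖ ≤ M) (x₀ : E) (T : ℝ≥0) :
    ∃ f : ℝ → E, f 0 = x₀ ∧ ∀ t ∈ Ioo (-(T : ℝ)) T, HasDerivAt f (F t (f t)) t := by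
  have h0 : (0 : ℝ) ∈ Icc (-(T : ℝ)) T := ⟨by simp, T.coe_nonneg⟩
  have hpl : IsPicardLindelof F ⟨0, h0⟩ x₀ (M.toNNReal * T) 0 M.toNNReal K :=
    { lipschitzOnWith := fun t _ => (hlip t).lipschitzOnWith
      continuousOn := fun x _ => (hcont x).continuousOn
      norm_le := fun t _ x _ => (hbdd t x).trans (Real.le_coe_toNNReal M)
      mul_max_le := by simp }
  obtain ⟨f, hf0, hf⟩ := hpl.exists_eq_forall_mem_Icc_hasDerivWithinAt₀
  exact ⟨f, hf0, fun t ht => (hf t (Ioo_subset_Icc_self ht)).hasDerivAt (Icc_mem_nhds ht.1 ht.2)⟩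

theorem exists_forall_hasDerivAt_of_norm_le (hlip : ∀ t, LipschitzWith K (F t))
    (hcont : ∀ x, Continuous (F · x)) (hbdd : ∀ t x, ‖F t x‖ ≤ M) (x₀ : E) :
    ∃ f : ℝ → E, f 0 = x₀ ∧ ∀ t, HasDerivAt f (F t (f t)) t := by
  choose sol hsol₀ hsol using exists_forall_mem_Ioo_hasDerivAt_of_norm_le hlip hcont hbdd x₀
  have hagree : ∀ (T T' : ℝ≥0) (t : ℝ), |t| < T → |t| < T' → sol T t = sol T' t := by
    intro T T' t hT hT'
    set S := min T T'
    have hS : ∀ T'' : ℝ≥0, S ≤ T'' → Ioo (-(S : ℝ)) S ⊆ Ioo (-(T'' : ℝ)) T'' := fun T'' h =>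
      Ioo_subset_Ioo (neg_le_neg (by exact_mod_cast h)) (by exact_mod_cast h)
    have htS : |t| < S := by simpa [S] using lt_min hT hT'
    exact ODE_solution_unique_of_mem_Ioo (s := fun _ => univ) (fun t _ => (hlip t).lipschitzOnWith)
      (abs_lt.1 (by simpa using (abs_nonneg t).trans_lt htS))
      (fun s hs => ⟨hsol T s (hS T (min_le_left _ _) hs), trivial⟩)
      (fun s hs => ⟨hsol T' s (hS T' (min_le_right _ _) hs), trivial⟩)
      ((hsol₀ T).trans (hsol₀ T').symm) (abs_lt.1 htS)
  refine ⟨fun t => sol (‖t‖₊ + 1) t, hsol₀ _, fun t => ?_⟩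
  have hlt : |t| < ((‖t‖₊ + 1 : ℝ≥0) : ℝ) := by simp
  have hev : (fun s => sol (‖s‖₊ + 1) s) =ᶠ[𝓝 t] sol (‖t‖₊ + 1) := by
    filter_upwards [(continuous_abs.tendsto t).eventually (gt_mem_nhds hlt)] with s hs
    exact hagree _ _ s (by simp) hs
  simpa only [hev.eq_of_nhds] using
    (hsol _ t (abs_lt.1 hlt)).congr_of_eventuallyEq hev

end GlobalExistence

theorem le_of_hasDerivAt_of_pos_at_level {F : ℝ → ℝ → ℝ} {u : ℝ → ℝ} {a m : ℝ}
    (hu : ∀ t, a ≤ t → HasDerivAt u (F t (u t)) t) (ha : m ≤ u a)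
    (hF : ∀ t, a ≤ t → 0 < F t m) {t : ℝ} (ht : a ≤ t) : m ≤ u t :=
  image_le_of_deriv_right_lt_deriv_boundary' continuousOn_const
    (fun _ _ => hasDerivWithinAt_const _ _ m) ha
    (fun s hs => (hu s hs.1).continuousAt.continuousWithinAt)
    (fun s hs => (hu s hs.1).hasDerivWithinAt)
    (fun s hs hms => hms ▸ hF s hs.1) ⟨ht, le_rfl⟩

theorem abs_exp_neg_sub_exp_neg_le {m a b : ℝ} (ha : m ≤ a) (hb : m ≤ b) :
    |exp (-a) - exp (-b)| ≤ exp (-m) * |a - b| := by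
  wlog hab : a ≤ b generalizing a b
  · rw [abs_sub_comm, abs_sub_comm a]
    exact this hb ha (le_of_not_ge hab)
  have hexp : exp (-b) = exp (-a) * exp (a - b) := by rw [← exp_add]; ring_nf
  have hsub : exp (-a) - exp (-b) = exp (-a) * (1 - exp (a - b)) := by rw [hexp]; ring
  rw [abs_of_nonneg (by rw [sub_nonneg]; exact exp_le_exp.2 (neg_le_neg hab)),
    abs_of_nonpos (sub_nonpos.2 hab), hsub]
  have h1 : 1 - exp (a - b) ≤ b - a := by linarith [add_one_le_exp (a - b)]
  have h2 : exp (-a) ≤ exp (-m) := exp_le_exp.2 (neg_le_neg ha)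
  have h3 : 0 ≤ 1 - exp (a - b) := by rw [sub_nonneg]; exact exp_le_one_iff.2 (by linarith)
  calc exp (-a) * (1 - exp (a - b)) ≤ exp (-m) * (b - a) :=
        mul_le_mul h2 h1 h3 (exp_pos _).le
    _ = exp (-m) * -(a - b) := by ring

theorem exists_le_and_mul_exp_lt (x c : ℝ) {ε : ℝ} (hε : 0 < ε) :
    ∃ m, m ≤ x ∧ c * exp m < ε := by
  have hlim : Tendsto (fun m => c * exp m) atBot (𝓝 0) := by
    simpa using tendsto_exp_atBot.const_mul c
  exact ((eventually_le_atBot x).and (hlim.eventually (gt_mem_nhds hε))).exists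

noncomputable def clampedLogField (A r c : ℝ) (g : ℝ → ℝ) (m t w : ℝ) : ℝ :=
  (r - c * exp (-max w m) + g t * exp (-max w m) ^ 2) / A

section ClampedLogField

variable {A r c G m : ℝ} {g : ℝ → ℝ}

theorem lipschitzWith_clampedLogField (hA : 0 < A) (hg : ∀ t, |g t| ≤ G) (t : ℝ) :
    LipschitzWith (Real.toNNReal ((|c| + 2 * G * exp (-m)) * exp (-m) / A))
      (clampedLogField A r c g m t) := by
  refine LipschitzWith.of_dist_le' fun x y => ?_
  set X := exp (-max x m)
  set Y := exp (-max y m)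
  have hXY : |X - Y| ≤ exp (-m) * |x - y| :=
    (abs_exp_neg_sub_exp_neg_le (le_max_right x m) (le_max_right y m)).trans
      (mul_le_mul_of_nonneg_left (abs_max_sub_max_le_abs x y m) (exp_pos _).le)
  have hX : |X| ≤ exp (-m) := by
    rw [abs_of_pos (exp_pos _)]; exact exp_le_exp.2 (neg_le_neg (le_max_right x m))
  have hY : |Y| ≤ exp (-m) := by
    rw [abs_of_pos (exp_pos _)]; exact exp_le_exp.2 (neg_le_neg (le_max_right y m))
  have hfactor : |-c + g t * (X + Y)| ≤ |c| + 2 * G * exp (-m) := by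
    calc |-c + g t * (X + Y)| ≤ |c| + |g t| * (|X| + |Y|) := by
          grw [abs_add_le, abs_neg, abs_mul, abs_add_le]
      _ ≤ |c| + G * (exp (-m) + exp (-m)) := by
          gcongr
          · exact (abs_nonneg _).trans (hg t)
          · exact hg t
      _ = |c| + 2 * G * exp (-m) := by ring
  have hdiff : clampedLogField A r c g m t x - clampedLogField A r c g m t y =
      (-c + g t * (X + Y)) * (X - Y) / A := by
    simp only [clampedLogField, X, Y]; ring
  rw [Real.dist_eq, Real.dist_eq, hdiff, abs_div, abs_mul, abs_of_pos hA, div_le_iff₀ hA]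
  calc |-c + g t * (X + Y)| * |X - Y| ≤ (|c| + 2 * G * exp (-m)) * (exp (-m) * |x - y|) := by
        gcongr
        exact (abs_nonneg _).trans hfactor
    _ = _ := by field_simp

theorem abs_clampedLogField_le (hA : 0 < A) (hg : ∀ t, |g t| ≤ G) (t w : ℝ) :
    |clampedLogField A r c g m t w| ≤ (|r| + |c| * exp (-m) + G * exp (-m) ^ 2) / A := by
  have hX : |exp (-max w m)| ≤ exp (-m) := by
    rw [abs_of_pos (exp_pos _)]; exact exp_le_exp.2 (neg_le_neg (le_max_right w m))
  rw [clampedLogField, abs_div, abs_of_pos hA]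
  gcongr
  calc |r - c * exp (-max w m) + g t * exp (-max w m) ^ 2|
      ≤ |r| + |c| * |exp (-max w m)| + |g t| * |exp (-max w m)| ^ 2 := by
        grw [abs_add_le, abs_sub, abs_mul, abs_mul, abs_pow]
    _ ≤ |r| + |c| * exp (-m) + G * exp (-m) ^ 2 := by
        gcongr
        · exact (abs_nonneg _).trans (hg t)
        · exact hg t

theorem continuous_clampedLogField (hg : Continuous g) (w : ℝ) :
    Continuous (clampedLogField A r c g m · w) := by
  unfold clampedLogField; fun_prop

theorem clampedLogField_self_pos (hA : 0 < A) (hr : 0 ≤ r) {t : ℝ} (h : c * exp m < g t) :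
    0 < clampedLogField A r c g m t m := by
  have hc : c < g t * exp (-m) := by
    calc c = c * exp m * exp (-m) := by rw [mul_assoc, ← exp_add]; simp
      _ < g t * exp (-m) := mul_lt_mul_of_pos_right h (exp_pos _)
  rw [clampedLogField, max_self]
  apply div_pos _ hA
  nlinarith [mul_pos (exp_pos (-m)) (sub_pos.2 hc)]

theorem exp_mul_clampedLogField_of_le {t w : ℝ} (hw : m ≤ w) :
    exp w * clampedLogField A r c g m t w = (r * exp w ^ 2 - c * exp w + g t) / (A * exp w) := by
  rw [clampedLogField, max_eq_left hw, exp_neg]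
  field_simp

end ClampedLogField

/-- For the scalar ODE
`dψ/dτ = (rψ² + (rz₂₀ - w₁ - 𝒟₀z₁₀)ψ - z₂₀w₁ + z₁₀ρ cos τ) / (αL(ψ + z₂₀))`
with `0 ≤ ρ < β𝒟₀z₂₀`, `β ∈ (0,1)`, any solution starting above `-z₂₀`
exists for all `τ ≥ 0` and stays above `-z₂₀`. -/
theorem stmt18 (α L r z10 z20 D0 : ℝ)
    (hα : 0 < α) (hL : 0 < L) (hr : 0 < r) (hz10 : 0 < z10) (hz20 : 0 < z20)
    (hD0 : 0 < D0) (w1 ρ : ℝ) (hρ0 : 0 ≤ ρ)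
    (β : ℝ) (hβ : β ∈ Set.Ioo (0:ℝ) 1) (hρ : ρ < β * D0 * z20)
    (ψ0 : ℝ) (hψ0 : -z20 < ψ0) :
    ∃ ψ : ℝ → ℝ, ψ 0 = ψ0 ∧ ∀ τ : ℝ, 0 ≤ τ →
      -z20 < ψ τ ∧
      HasDerivAt ψ
        ((r * (ψ τ) ^ 2 + (r * z20 - w1 - D0 * z10) * ψ τ
            - z20 * w1 + z10 * ρ * Real.cos τ) /
          (α * L * (ψ τ + z20))) τ := by
  have hA : 0 < α * L := mul_pos hα hL
  set c := r * z20 + w1 + D0 * z10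
  set g : ℝ → ℝ := fun τ => z10 * (D0 * z20 + ρ * cos τ)
  have hgmin_pos : 0 < z10 * (D0 * z20 - ρ) := by
    have : β * (D0 * z20) < D0 * z20 := mul_lt_of_lt_one_left (by positivity) hβ.2
    have : 0 < D0 * z20 - ρ := by linarith
    positivity
  have hcos : ∀ τ, |ρ * cos τ| ≤ ρ := fun τ => by
    rw [abs_mul, abs_of_nonneg hρ0]; exact mul_le_of_le_one_right hρ0 (abs_cos_le_one τ)
  have hgmin : ∀ τ, z10 * (D0 * z20 - ρ) ≤ g τ := fun τ =>
    mul_le_mul_of_nonneg_left (by linarith [neg_abs_le (ρ * cos τ), hcos τ]) hz10.le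
  have hgmax : ∀ τ, |g τ| ≤ z10 * (D0 * z20 + ρ) := fun τ => by
    rw [abs_of_pos (hgmin_pos.trans_le (hgmin τ))]
    exact mul_le_mul_of_nonneg_left (by linarith [le_abs_self (ρ * cos τ), hcos τ]) hz10.le
  obtain ⟨m, hm₀, hmc⟩ := exists_le_and_mul_exp_lt (log (ψ0 + z20)) c hgmin_pos
  obtain ⟨w, hw₀, hw⟩ := exists_forall_hasDerivAt_of_norm_le
    (lipschitzWith_clampedLogField (r := r) (c := c) (m := m) hA hgmax)
    (continuous_clampedLogField (by fun_prop)) (abs_clampedLogField_le hA hgmax) (log (ψ0 + z20))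
  have hwm : ∀ τ, 0 ≤ τ → m ≤ w τ := fun τ hτ =>
    le_of_hasDerivAt_of_pos_at_level (fun t _ => hw t) (hw₀ ▸ hm₀)
      (fun t _ => clampedLogField_self_pos hA hr.le (hmc.trans_le (hgmin t))) hτ
  refine ⟨fun τ => exp (w τ) - z20, by simp [hw₀, exp_log (neg_lt_iff_pos_add.1 hψ0)],
    fun τ hτ => ⟨by simpa using exp_pos (w τ), ?_⟩⟩
  refine ((hw τ).exp.sub_const z20).congr_deriv ?_
  rw [exp_mul_clampedLogField_of_le (hwm τ hτ)]
  congr 1 <;> simp only [c, g] <;> ring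
end
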